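/- Let f : GL(d,ℝ)^k → ℝ be an invariant function with variation functions F₁,…,F_k. Then for every (g₁,…,g_k) ∈ GL(d,ℝ)^k one has Σ_{i=1}^{k} F_i(g₁,…,g_k) = Σ_{i=1}^{k} g_i⁻¹·F_i(g₁,…,g_k)·g_i. (This is the cycle condition ensuring that the chain Σ_i α_i ⊗ F_i(ρ(ᾱ)) representing the Poincaré dual of the Hamiltonian vector field of f_ᾱ is a 1-cycle; it follows by differentiating the invariance of f under simultaneous conjugation by exp(tX).) -/

import Mathlib

/-!
Conjugating every `g i` by `exp (t • X)` leaves `f` unchanged, so the derivative `φ` of `f` at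
`g` vanishes on the tangent vector `(X * g i - g i * X)_i`. Splitting this vector slot by slot,
each partial derivative is read off the variation functions as `φ (Pi.single j Z) =
tr (F j g * Z * (g j)⁻¹)`, and cyclicity of the trace turns the vanishing into
`Σ_j tr ((F j g - (g j)⁻¹ * F j g * g j) * X) = 0` for every `X`; nondegeneracy of the trace
form concludes.
-/

open Matrix

attribute [local instance] Matrix.normedAddCommGroup Matrix.normedSpace

noncomputable section

/-- An invariant multi-function on `GL(d,ℝ)^k`: a real-valued function on `k`-tuples of
`d × d` real matrices that is differentiable on the open set of tuples of invertible
matrices and invariant under the diagonal action of `GL(d,ℝ)` by conjugation. -/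
def IsInvariantFun (d k : ℕ) (f : (Fin k → Matrix (Fin d) (Fin d) ℝ) → ℝ) : Prop :=
  DifferentiableOn ℝ f {g : Fin k → Matrix (Fin d) (Fin d) ℝ | ∀ i, IsUnit (g i)} ∧
  ∀ h : Matrix (Fin d) (Fin d) ℝ, IsUnit h →
    ∀ g : Fin k → Matrix (Fin d) (Fin d) ℝ, (∀ i, IsUnit (g i)) →
      f (fun i => h * g i * h⁻¹) = f g

/-- `F` is the tuple of variation functions of `f` with respect to the trace form
`𝔅(X,Y) = tr (X*Y)`: the matrix `F j g` satisfies that `tr (F j g * X)` is the derivative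
at `t = 0` of `t ↦ f (g₁, …, exp(tX)·g_j, …, g_k)`, for every `X`. -/
def IsVariationFun (d k : ℕ) (f : (Fin k → Matrix (Fin d) (Fin d) ℝ) → ℝ)
    (F : Fin k → (Fin k → Matrix (Fin d) (Fin d) ℝ) → Matrix (Fin d) (Fin d) ℝ) : Prop :=
  ∀ (j : Fin k) (g : Fin k → Matrix (Fin d) (Fin d) ℝ), (∀ i, IsUnit (g i)) →
    ∀ X : Matrix (Fin d) (Fin d) ℝ,
      HasDerivAt
        (fun t : ℝ => f (Function.update g j (NormedSpace.exp (t • X) * g j)))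
        (Matrix.trace (F j g * X)) 0

open NormedSpace

section NormedAlgebra

variable {𝔸 : Type*} [NormedRing 𝔸] [NormedAlgebra ℝ 𝔸] [CompleteSpace 𝔸]

theorem hasDerivAt_exp_smul_mul (X A : 𝔸) :
    HasDerivAt (fun t : ℝ => exp (t • X) * A) (X * A) 0 := by
  simpa using (hasDerivAt_exp_smul_const (𝕂 := ℝ) X 0).mul_const A

theorem hasDerivAt_exp_smul_mul_mul_exp_neg_smul (X A : 𝔸) :
    HasDerivAt (fun t : ℝ => exp (t • X) * A * exp (t • -X)) (X * A - A * X) 0 := by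
  convert (hasDerivAt_exp_smul_mul X A).mul (hasDerivAt_exp_smul_const (𝕂 := ℝ) (-X) 0) using 1
  · rfl
  · simp [sub_eq_add_neg]

end NormedAlgebra

namespace Matrix

variable {n : Type*} [Fintype n] [DecidableEq n]

/- `HasDerivAt` only depends on the topology, which the operator norm `linftyOpNormedRing`
shares with the entrywise norm, so the normed-algebra statements transfer verbatim. -/
theorem hasDerivAt_exp_smul_mul (X A : Matrix n n ℝ) :
    HasDerivAt (fun t : ℝ => exp (t • X) * A) (X * A) 0 :=
  @_root_.hasDerivAt_exp_smul_mul _ Matrix.linftyOpNormedRing Matrix.linftyOpNormedAlgebra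
    (FiniteDimensional.complete ℝ _) X A

theorem hasDerivAt_exp_smul_mul_mul_exp_neg_smul (X A : Matrix n n ℝ) :
    HasDerivAt (fun t : ℝ => exp (t • X) * A * exp (t • -X)) (X * A - A * X) 0 :=
  @_root_.hasDerivAt_exp_smul_mul_mul_exp_neg_smul _ Matrix.linftyOpNormedRing
    Matrix.linftyOpNormedAlgebra (FiniteDimensional.complete ℝ _) X A

theorem isOpen_setOf_isUnit {K : Type*} [Field K] [TopologicalSpace K] [IsTopologicalRing K]
    [T1Space K] : IsOpen {A : Matrix n n K | IsUnit A} := by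
  simp only [isUnit_iff_isUnit_det, isUnit_iff_ne_zero]
  exact isOpen_ne_fun continuous_id.matrix_det continuous_const

theorem isOpen_setOf_forall_isUnit {ι K : Type*} [Finite ι] [Field K] [TopologicalSpace K]
    [IsTopologicalRing K] [T1Space K] : IsOpen {g : ι → Matrix n n K | ∀ i, IsUnit (g i)} := by
  simpa only [Set.ofPred_forall, Set.preimage_ofPred_eq] using isOpen_iInter_of_finite fun i =>
    isOpen_setOf_isUnit.preimage (continuous_apply (A := fun _ : ι => Matrix n n K) i)

theorem trace_mul_commutator_mul_inv {R : Type*} [CommRing R] (F X G : Matrix n n R)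
    (hG : IsUnit G) :
    trace (F * (X * G - G * X) * G⁻¹) = trace (F * X) - trace (G⁻¹ * F * G * X) := by
  have hdet := (isUnit_iff_isUnit_det G).mp hG
  have hX : F * (X * G) * G⁻¹ = F * X := by
    rw [← Matrix.mul_assoc, mul_nonsing_inv_cancel_right _ _ hdet]
  have hconj : trace (F * (G * X) * G⁻¹) = trace (G⁻¹ * F * G * X) := by
    rw [trace_mul_comm]
    simp only [Matrix.mul_assoc]
  rw [mul_sub, sub_mul, trace_sub, hX, hconj]

end Matrix

theorem HasDerivAt.update {𝕜 ι E : Type*} [NontriviallyNormedField 𝕜] [Fintype ι]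
    [DecidableEq ι] [NormedAddCommGroup E] [NormedSpace 𝕜 E] {c : 𝕜 → E} {c' : E} {t : 𝕜}
    (hc : HasDerivAt c c' t) (g : ι → E) (j : ι) :
    HasDerivAt (fun s => Function.update g j (c s)) (Pi.single j c') t := by
  refine hasDerivAt_pi.mpr fun i => ?_
  rcases eq_or_ne i j with rfl | hij
  · simpa using hc
  · simpa [hij] using hasDerivAt_const t (g i)

section InvariantFun

variable {d k : ℕ} {f : (Fin k → Matrix (Fin d) (Fin d) ℝ) → ℝ}
  {F : Fin k → (Fin k → Matrix (Fin d) (Fin d) ℝ) → Matrix (Fin d) (Fin d) ℝ}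
  {φ : (Fin k → Matrix (Fin d) (Fin d) ℝ) →L[ℝ] ℝ} {g : Fin k → Matrix (Fin d) (Fin d) ℝ}

theorem IsInvariantFun.hasFDerivAt (hf : IsInvariantFun d k f) (hg : ∀ i, IsUnit (g i)) :
    HasFDerivAt f (fderiv ℝ f g) g :=
  ((hf.1 g hg).differentiableAt (Matrix.isOpen_setOf_forall_isUnit.mem_nhds hg)).hasFDerivAt

theorem IsVariationFun.fderiv_apply_single (hF : IsVariationFun d k f F)
    (hφ : HasFDerivAt f φ g) (hg : ∀ i, IsUnit (g i)) (j : Fin k) (Z : Matrix (Fin d) (Fin d) ℝ) :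
    φ (Pi.single j Z) = trace (F j g * Z * (g j)⁻¹) := by
  have hZ : Z * (g j)⁻¹ * g j = Z :=
    nonsing_inv_mul_cancel_right _ _ ((isUnit_iff_isUnit_det _).mp (hg j))
  have hcurve := (Matrix.hasDerivAt_exp_smul_mul (Z * (g j)⁻¹) (g j)).update g j
  have hdiff := hφ.comp_hasDerivAt_of_eq 0 hcurve (by simp)
  rw [hZ] at hdiff
  exact (hdiff.unique (hF j g hg (Z * (g j)⁻¹))).trans (by rw [Matrix.mul_assoc])

theorem IsInvariantFun.fderiv_apply_commutator_eq_zero (hf : IsInvariantFun d k f)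
    (hφ : HasFDerivAt f φ g) (hg : ∀ i, IsUnit (g i)) (X : Matrix (Fin d) (Fin d) ℝ) :
    φ (fun i => X * g i - g i * X) = 0 := by
  have hconst : (fun t : ℝ => f (fun i => exp (t • X) * g i * exp (t • -X))) = fun _ => f g := by
    funext t
    rw [smul_neg, Matrix.exp_neg]
    exact hf.2 _ (Matrix.isUnit_exp _) g hg
  have hdiff := hφ.comp_hasDerivAt_of_eq 0
    (hasDerivAt_pi.mpr fun i => Matrix.hasDerivAt_exp_smul_mul_mul_exp_neg_smul X (g i))
    (by simp)
  refine hdiff.unique ?_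
  rw [Function.comp_def, hconst]
  exact hasDerivAt_const 0 (f g)

end InvariantFun

/-- the cycle condition for the variation functions of an invariant
function: `Σ_i F_i g = Σ_i g_i⁻¹ · F_i g · g_i`. -/
theorem variation_functions_cycle_condition (d k : ℕ)
    (f : (Fin k → Matrix (Fin d) (Fin d) ℝ) → ℝ)
    (F : Fin k → (Fin k → Matrix (Fin d) (Fin d) ℝ) → Matrix (Fin d) (Fin d) ℝ)
    (hf : IsInvariantFun d k f) (hF : IsVariationFun d k f F)
    (g : Fin k → Matrix (Fin d) (Fin d) ℝ) (hg : ∀ i, IsUnit (g i)) :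
    ∑ i, F i g = ∑ i, (g i)⁻¹ * F i g * g i := by
  rw [Matrix.ext_iff_trace_mul_right]
  intro X
  have hφ := hf.hasFDerivAt hg
  have h0 := hf.fderiv_apply_commutator_eq_zero hφ hg X
  rw [← Finset.univ_sum_single (fun i => X * g i - g i * X), map_sum] at h0
  simp only [hF.fderiv_apply_single hφ hg, Matrix.trace_mul_commutator_mul_inv _ _ _ (hg _),
    Finset.sum_sub_distrib, sub_eq_zero] at h0
  simpa only [Finset.sum_mul, trace_sum] using h0
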